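/- arXiv:1912.00593 — 3 statements merged into one kernel-verified Lean document; each statement's English description precedes it below -/
import Mathlib

section
/- Let v ∈ ℂ^n, u ∈ ℤ^n, and b ∈ ℂ^n with b_j ≠ 0 for every j. Then, as an equation of integers, ord_s([v+sb]_{u₋}) − ord_s([v+u+sb]_{u₊}) = |nsupp(v+u)| − |nsupp(v)|; that is, the rational function a_u(s) = [v+sb]_{u₋} / [v+u+sb]_{u₊} has order |nsupp(v+u)| − |nsupp(v)| at s = 0. (Corollary 5.3, order statement.) -/
open scoped Classical

/-- The negative support of `v`: indices where `v i` is a negative integer. -/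
noncomputable def nsupp {n : ℕ} (v : Fin n → ℂ) : Finset (Fin n) :=
  Finset.univ.filter (fun i => ∃ m : ℤ, m < 0 ∧ v i = (m : ℂ))

/-- The falling factorial `[v]_u = ∏_i ∏_{k=0}^{u_i - 1} (v_i - k)`. -/
noncomputable def ffall {n : ℕ} (v : Fin n → ℂ) (u : Fin n → ℕ) : ℂ :=
  ∏ i, ∏ k ∈ Finset.range (u i), (v i - (k : ℂ))

/-- The reduced falling factorial: the product of the nonzero factors of `[v]_u`. -/
noncomputable def redffall {n : ℕ} (v : Fin n → ℂ) (u : Fin n → ℕ) : ℂ :=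
  ∏ i, ∏ k ∈ (Finset.range (u i)).filter (fun k : ℕ => v i - (k : ℂ) ≠ 0), (v i - (k : ℂ))

/-- The polynomial `[v + s b]_u = ∏_i ∏_{k=0}^{u_i - 1} (v_i - k + s b_i)` in `ℂ[s]`. -/
noncomputable def pertFF {n : ℕ} (v b : Fin n → ℂ) (u : Fin n → ℕ) : Polynomial ℂ :=
  ∏ i, ∏ k ∈ Finset.range (u i),
    (Polynomial.C (v i - (k : ℂ)) + Polynomial.C (b i) * Polynomial.X)

/-!
Each linear factor `v_i - k + s b_i` has order `1` at `s = 0` if `v_i = k` and order `0`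
otherwise, so the order of `[v + s b]_w` counts the pairs `(i, k)` with `k < w_i` and `v_i = k`.
For a fixed coordinate with `v_i = m ∈ ℤ` and `d = u_i`, the numerator counts `0 ≤ m < -d`
and the denominator counts `0 ≤ m + d < d`; their difference is
`[m + d < 0] - [m < 0]`, which is the contribution of `i` to `|nsupp (v + u)| - |nsupp v|`.
Non-integral coordinates contribute nothing to either side.
-/

namespace Polynomial

variable {R : Type*}

theorem natTrailingDegree_C_add_C_mul_X [Semiring R] [NoZeroDivisors R] {b : R} (hb : b ≠ 0)
    (c : R) : (C c + C b * X).natTrailingDegree = if c = 0 then 1 else 0 := by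
  have : Nontrivial R := ⟨⟨b, 0, hb⟩⟩
  split_ifs with hc
  · rw [hc, C_0, zero_add, natTrailingDegree_mul (C_ne_zero.mpr hb) X_ne_zero,
      natTrailingDegree_C, natTrailingDegree_X, zero_add]
  · apply natTrailingDegree_eq_zero_of_constantCoeff_ne_zero
    simpa [constantCoeff_apply] using hc

theorem C_add_C_mul_X_ne_zero [Semiring R] {b : R} (hb : b ≠ 0) (c : R) :
    C c + C b * X ≠ 0 := fun h => hb (by simpa using congrArg (coeff · 1) h)

theorem natTrailingDegree_prod [CommSemiring R] [NoZeroDivisors R] [Nontrivial R] {ι : Type*}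
    (s : Finset ι) {f : ι → R[X]} (hf : ∀ i ∈ s, f i ≠ 0) :
    (∏ i ∈ s, f i).natTrailingDegree = ∑ i ∈ s, (f i).natTrailingDegree := by
  induction s using Finset.cons_induction with
  | empty => simp
  | cons a s _ ih =>
    rw [Finset.forall_mem_cons] at hf
    rw [Finset.prod_cons, Finset.sum_cons,
      natTrailingDegree_mul hf.1 (Finset.prod_ne_zero_iff.mpr hf.2), ih hf.2]

end Polynomial

open Polynomial

theorem natTrailingDegree_pertFF {n : ℕ} (v : Fin n → ℂ) {b : Fin n → ℂ} (hb : ∀ j, b j ≠ 0)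
    (w : Fin n → ℕ) :
    (pertFF v b w).natTrailingDegree
      = ∑ i, ((Finset.range (w i)).filter (fun k : ℕ => v i = k)).card := by
  have hfac : ∀ i (k : ℕ), C (v i - k) + C (b i) * X ≠ 0 :=
    fun i _ => C_add_C_mul_X_ne_zero (hb i) _
  rw [pertFF, natTrailingDegree_prod _ fun i _ => Finset.prod_ne_zero_iff.mpr fun k _ => hfac i k]
  refine Finset.sum_congr rfl fun i _ => ?_
  rw [natTrailingDegree_prod _ fun k _ => hfac i k, Finset.card_filter]
  simp only [natTrailingDegree_C_add_C_mul_X (hb i), sub_eq_zero]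

section IntCount

variable {R : Type*} [AddGroupWithOne R] [CharZero R]

theorem card_filter_range_intCast_eq (m : ℤ) (N : ℕ) :
    ((Finset.range N).filter (fun k : ℕ => (m : R) = k)).card
      = if 0 ≤ m ∧ m < N then 1 else 0 := by
  have hcast : ∀ k : ℕ, (m : R) = k ↔ k = m.toNat ∧ 0 ≤ m := fun k => by
    rw [← Int.cast_natCast, Int.cast_inj]; omega
  simp only [hcast]
  split_ifs with h
  · rw [Finset.card_eq_one]
    exact ⟨m.toNat, by ext k; simp only [Finset.mem_filter, Finset.mem_range,
      Finset.mem_singleton]; omega⟩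
  · rw [Finset.card_eq_zero, Finset.filter_eq_empty_iff]
    simp only [Finset.mem_range]; omega

theorem exists_neg_intCast_eq_intCast_iff (p : ℤ) :
    (∃ m : ℤ, m < 0 ∧ (p : R) = m) ↔ p < 0 := by
  simp only [Int.cast_inj, exists_eq_right']

end IntCount

theorem card_filter_range_eq_zero_of_forall_ne_intCast {R : Type*} [AddGroupWithOne R] {z : R}
    (hz : ∀ m : ℤ, z ≠ m) (N : ℕ) :
    ((Finset.range N).filter (fun k : ℕ => z = k)).card = 0 := by
  rw [Finset.card_eq_zero, Finset.filter_eq_empty_iff]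
  exact fun k _ => by simpa using hz k

theorem card_filter_range_sub_card_filter_range (z : ℂ) (d : ℤ) :
    (((Finset.range (-d).toNat).filter (fun k : ℕ => z = k)).card : ℤ)
        - ((Finset.range d.toNat).filter (fun k : ℕ => z + d = k)).card
      = (if ∃ m : ℤ, m < 0 ∧ z + d = m then 1 else 0)
        - (if ∃ m : ℤ, m < 0 ∧ z = m then 1 else 0) := by
  by_cases hz : ∃ m : ℤ, z = m
  · obtain ⟨m, rfl⟩ := hz
    rw [← Int.cast_add, card_filter_range_intCast_eq, card_filter_range_intCast_eq,
      exists_neg_intCast_eq_intCast_iff, exists_neg_intCast_eq_intCast_iff]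
    split_ifs <;> omega
  · push Not at hz
    have hzd : ∀ m : ℤ, z + d ≠ m := fun m h => hz (m - d) (by push_cast; rw [← h]; ring)
    rw [card_filter_range_eq_zero_of_forall_ne_intCast hz,
      card_filter_range_eq_zero_of_forall_ne_intCast hzd,
      if_neg fun ⟨m, _, h⟩ => hzd m h, if_neg fun ⟨m, _, h⟩ => hz m h]
    rfl

theorem ord_coeff_ratio_general {n : ℕ} (v b : Fin n → ℂ) (u : Fin n → ℤ)
    (hb : ∀ j, b j ≠ 0) :
    ((pertFF v b (fun i => (-(u i)).toNat)).natTrailingDegree : ℤ) -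
      ((pertFF (fun i => v i + ((u i : ℤ) : ℂ)) b (fun i => (u i).toNat)).natTrailingDegree : ℤ)
    = ((nsupp (fun i => v i + ((u i : ℤ) : ℂ))).card : ℤ) - ((nsupp v).card : ℤ) := by
  rw [natTrailingDegree_pertFF _ hb, natTrailingDegree_pertFF _ hb, nsupp, nsupp,
    Finset.card_filter, Finset.card_filter]
  push_cast
  rw [← Finset.sum_sub_distrib, ← Finset.sum_sub_distrib]
  exact Finset.sum_congr rfl fun i _ => card_filter_range_sub_card_filter_range (v i) (u i)

/-- Corollary 5.3, order statement: if `b_j ≠ 0` for all `j`, then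
`ord_s([v+sb]_{u₋}) − ord_s([v+u+sb]_{u₊}) = |nsupp(v+u)| − |nsupp(v)|` as integers. -/
theorem ord_coeff_ratio {n : ℕ} (hn : 0 < n) (v b : Fin n → ℂ) (u : Fin n → ℤ)
    (hb : ∀ j, b j ≠ 0) :
    ((pertFF v b (fun i => (-(u i)).toNat)).natTrailingDegree : ℤ) -
      ((pertFF (fun i => v i + ((u i : ℤ) : ℂ)) b (fun i => (u i).toNat)).natTrailingDegree : ℤ)
    = ((nsupp (fun i => v i + ((u i : ℤ) : ℂ))).card : ℤ) - ((nsupp v).card : ℤ) :=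
  ord_coeff_ratio_general v b u hb
end

section
/- Let v, b ∈ ℂ^n with b_j ≠ 0 for every j, and let u, u' ∈ ℤ^n. Set I₀ = nsupp(v), I = nsupp(v+u), and J = nsupp(v+u−u'). Then the ratio of trailing coefficients satisfies tc([v+sb]_{u₋} · [v+u+sb]_{u'₊}) / tc([v+u+sb]_{u₊}) = (b_{I\I₀} · b_{J\I} / b_{I₀\I}) · ([v]^_{u₋} · [v+u]^_{u'₊} / [v+u]^_{u₊}), where b_K := ∏_{k∈K} b_k for a finite index set K. In particular the leading coefficient of the critical term in equation (12) of Theorem 5.4 equals b_{I\I₀} b_{J\I} / b_{I₀\I} times a nonzero constant that does not depend on b. -/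
open scoped Classical

/-!
A factor `v_i - k + s b_i` has trailing coefficient `v_i - k`, unless `v_i = k`, in which case it
is `b_i`; since trailing coefficients are multiplicative over `ℂ`, the trailing coefficient of
`[w + s b]_d` is `∏ b_i` over the indices with `w_i ∈ {0, …, d_i - 1}`, times `[w]^_d`. For
`d ∈ ℕ^n` these are exactly the indices where `w_i - d_i` is a negative integer but `w_i` is
not, i.e. `nsupp (w - d) \ nsupp w`, which produces the three index sets `I \ I₀`, `J \ I` and
`I₀ \ I`.
-/

open Polynomial Finset

theorem Polynomial.trailingCoeff_prod {R ι : Type*} [CommSemiring R] [NoZeroDivisors R]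
    (s : Finset ι) (f : ι → R[X]) :
    (∏ i ∈ s, f i).trailingCoeff = ∏ i ∈ s, (f i).trailingCoeff := by
  induction s using Finset.cons_induction with
  | empty => simp [trailingCoeff]
  | cons a s ha ih => rw [prod_cons, prod_cons, trailingCoeff_mul, ih]

theorem Polynomial.trailingCoeff_C_add_C_mul_X {R : Type*} [Semiring R] (a b : R) :
    (C a + C b * X).trailingCoeff = if a = 0 then b else a := by
  split_ifs with ha
  · rcases eq_or_ne b 0 with rfl | hb
    · simp [ha]
    · rw [ha, C_0, zero_add, C_mul_X_eq_monomial, trailingCoeff, natTrailingDegree_monomial hb,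
        coeff_monomial_same]
  · rw [trailingCoeff_eq_coeff_zero] <;> simp [ha]

theorem Polynomial.trailingCoeff_prod_C_add_C_mul_X {R ι : Type*} [CommSemiring R]
    [NoZeroDivisors R] (s : Finset ι) (f : ι → R) (b : R) :
    (∏ i ∈ s, (C (f i) + C b * X)).trailingCoeff =
      b ^ #{i ∈ s | f i = 0} * ∏ i ∈ s with f i ≠ 0, f i := by
  simp_rw [trailingCoeff_prod, trailingCoeff_C_add_C_mul_X]
  rw [prod_ite, prod_const]

theorem card_filter_sub_natCast_eq_zero {R : Type*} [AddGroupWithOne R] [CharZero R]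
    (z : R) (m : ℕ) :
    ((range m).filter fun k : ℕ => z - k = 0).card = if ∃ k < m, z = k then 1 else 0 := by
  split_ifs with h
  · obtain ⟨k₀, hk₀, rfl⟩ := h
    simp [sub_eq_zero, filter_eq, hk₀]
  · simpa [sub_eq_zero] using h

theorem exists_natCast_lt_toNat_iff {R : Type*} [Ring R] [CharZero R] (z : R) (d : ℤ) :
    (∃ k < d.toNat, z = k) ↔ (∃ m : ℤ, m < 0 ∧ z - d = m) ∧ ¬∃ m : ℤ, m < 0 ∧ z = m := by
  by_cases hz : ∃ j : ℤ, z = j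
  · obtain ⟨j, rfl⟩ := hz
    simp only [← Int.cast_sub, Int.cast_inj, exists_eq_right', ← Int.cast_natCast (R := R)]
    constructor
    · rintro ⟨k, hk, rfl⟩
      omega
    · rintro ⟨hjd, hj⟩
      exact ⟨j.toNat, by omega, by omega⟩
  · constructor
    · rintro ⟨k, -, rfl⟩
      exact absurd ⟨k, (Int.cast_natCast k).symm⟩ hz
    · rintro ⟨⟨m, -, hm⟩, -⟩
      exact absurd ⟨m + d, by push_cast; exact sub_eq_iff_eq_add.mp hm⟩ hz

noncomputable def vanishingIndices {n : ℕ} (v : Fin n → ℂ) (u : Fin n → ℕ) : Finset (Fin n) :=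
  {i | ∃ k < u i, v i = k}

theorem trailingCoeff_pertFF {n : ℕ} (v b : Fin n → ℂ) (u : Fin n → ℕ) :
    (pertFF v b u).trailingCoeff = (∏ i ∈ vanishingIndices v u, b i) * redffall v u := by
  rw [pertFF, trailingCoeff_prod]
  simp_rw [trailingCoeff_prod_C_add_C_mul_X, card_filter_sub_natCast_eq_zero, pow_ite, pow_one,
    pow_zero]
  rw [prod_mul_distrib, vanishingIndices, prod_filter, redffall]

theorem vanishingIndices_toNat {n : ℕ} (w w' : Fin n → ℂ) (d : Fin n → ℤ)
    (h : ∀ i, w' i = w i - d i) :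
    vanishingIndices w (fun i => (d i).toNat) = nsupp w' \ nsupp w := by
  ext i
  simp only [vanishingIndices, nsupp, mem_filter, mem_sdiff, mem_univ, true_and, h]
  exact exists_natCast_lt_toNat_iff (w i) (d i)

theorem trailingCoeff_critical_term_general {n : ℕ} (v b : Fin n → ℂ) (u u' : Fin n → ℤ)
    (I₀ I J : Finset (Fin n)) (hI₀ : I₀ = nsupp v)
    (hI : I = nsupp (fun i => v i + ((u i : ℤ) : ℂ)))
    (hJ : J = nsupp (fun i => v i + ((u i - u' i : ℤ) : ℂ))) :
    (pertFF v b (fun i => (-(u i)).toNat) *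
        pertFF (fun i => v i + ((u i : ℤ) : ℂ)) b (fun i => (u' i).toNat)).trailingCoeff /
      (pertFF (fun i => v i + ((u i : ℤ) : ℂ)) b (fun i => (u i).toNat)).trailingCoeff
    = ((∏ i ∈ I \ I₀, b i) * (∏ i ∈ J \ I, b i) / (∏ i ∈ I₀ \ I, b i)) *
        (redffall v (fun i => (-(u i)).toNat) *
            redffall (fun i => v i + ((u i : ℤ) : ℂ)) (fun i => (u' i).toNat) /
          redffall (fun i => v i + ((u i : ℤ) : ℂ)) (fun i => (u i).toNat)) := by
  have hI_I₀ := vanishingIndices_toNat v (fun i => v i + ((u i : ℤ) : ℂ)) (fun i => -(u i))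
    fun i => by push_cast; ring
  have hJ_I := vanishingIndices_toNat (fun i => v i + ((u i : ℤ) : ℂ))
    (fun i => v i + ((u i - u' i : ℤ) : ℂ)) u' fun i => by push_cast; ring
  have hI₀_I := vanishingIndices_toNat (fun i => v i + ((u i : ℤ) : ℂ)) v u fun i => by ring
  rw [trailingCoeff_mul, trailingCoeff_pertFF, trailingCoeff_pertFF, trailingCoeff_pertFF,
    hI_I₀, hJ_I, hI₀_I, hI₀, hI, hJ]
  ring

/-- leading coefficient of the critical term in equation (12) of
Theorem 5.4: with `I₀ = nsupp(v)`, `I = nsupp(v+u)`, `J = nsupp(v+u−u')`,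
`tc([v+sb]_{u₋}·[v+u+sb]_{u'₊}) / tc([v+u+sb]_{u₊})
  = (b_{I\I₀}·b_{J\I}/b_{I₀\I}) · ([v]^_{u₋}·[v+u]^_{u'₊}/[v+u]^_{u₊})`. -/
theorem trailingCoeff_critical_term {n : ℕ} (hn : 0 < n) (v b : Fin n → ℂ) (u u' : Fin n → ℤ)
    (hb : ∀ j, b j ≠ 0)
    (I₀ I J : Finset (Fin n)) (hI₀ : I₀ = nsupp v)
    (hI : I = nsupp (fun i => v i + ((u i : ℤ) : ℂ)))
    (hJ : J = nsupp (fun i => v i + ((u i - u' i : ℤ) : ℂ))) :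
    (pertFF v b (fun i => (-(u i)).toNat) *
        pertFF (fun i => v i + ((u i : ℤ) : ℂ)) b (fun i => (u' i).toNat)).trailingCoeff /
      (pertFF (fun i => v i + ((u i : ℤ) : ℂ)) b (fun i => (u i).toNat)).trailingCoeff
    = ((∏ i ∈ I \ I₀, b i) * (∏ i ∈ J \ I, b i) / (∏ i ∈ I₀ \ I, b i)) *
        (redffall v (fun i => (-(u i)).toNat) *
            redffall (fun i => v i + ((u i : ℤ) : ℂ)) (fun i => (u' i).toNat) /
          redffall (fun i => v i + ((u i : ℤ) : ℂ)) (fun i => (u i).toNat)) :=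
  trailingCoeff_critical_term_general v b u u' I₀ I J hI₀ hI hJ
end

section
/- Let v ∈ ℂ^n, let b^{(1)}, …, b^{(l)} ∈ ℂ^n, and let u ∈ ℕ^n. Define Q ∈ ℂ[s₁,…,s_l] by Q = ∏_{i=1}^n ∏_{k=0}^{u_i−1} (v_i − k + ℓ_i), where ℓ_i = Σ_{j=1}^l b_i^{(j)} s_j, and set e = |nsupp(v−u) \ nsupp(v)|. Then every homogeneous component of Q of total degree < e is zero, and the homogeneous component of Q of total degree e equals [v]^_u · ∏_{i ∈ nsupp(v−u)\nsupp(v)} ℓ_i. (This is the multivariate analogue of Lemma 5.1 underlying Lemma 6.1.) -/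
/-!
Split each factor product of `Q` according to whether the constant term `v_i - k` vanishes.
A vanishing factor is just `ℓ_i`; it occurs for at most one `k`, and for some `k < u_i`
exactly when `i ∈ nsupp(v - u) \ nsupp(v)`. So `Q = P * ∏_{i ∈ nsupp(v-u) \ nsupp(v)} ℓ_i`,
where `P = pertFFmvReduced` has constant term `[v]^_u` and the second factor is homogeneous of degree `e`;
multiplying by it shifts every homogeneous component up by `e`.
-/

open scoped Classical

/-- The linear form `ℓ_i = Σ_j b_i^{(j)} s_j` in `ℂ[s₁,…,s_l]`. -/
noncomputable def ell {n l : ℕ} (b : Fin l → Fin n → ℂ) (i : Fin n) :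
    MvPolynomial (Fin l) ℂ :=
  ∑ j, MvPolynomial.C (b j i) * MvPolynomial.X j

/-- The multivariate perturbed falling factorial
`∏_i ∏_{k=0}^{u_i−1} (v_i − k + ℓ_i)` in `ℂ[s₁,…,s_l]`. -/
noncomputable def pertFFmv {n l : ℕ} (v : Fin n → ℂ) (b : Fin l → Fin n → ℂ)
    (u : Fin n → ℕ) : MvPolynomial (Fin l) ℂ :=
  ∏ i, ∏ k ∈ Finset.range (u i), (MvPolynomial.C (v i - (k : ℂ)) + ell b i)

open MvPolynomial Finset

attribute [local instance] MvPolynomial.gradedAlgebra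

theorem MvPolynomial.homogeneousComponent_mul_of_isHomogeneous_right {σ R : Type*}
    [CommSemiring R] {q : MvPolynomial σ R} {e : ℕ} (hq : q.IsHomogeneous e)
    (p : MvPolynomial σ R) (m : ℕ) :
    homogeneousComponent m (p * q) =
      if e ≤ m then homogeneousComponent (m - e) p * q else 0 := by
  simpa only [DirectSum.decompose, Equiv.coe_fn_mk, decomposition.decompose'_apply] using
    DirectSum.coe_decompose_mul_of_right_mem (homogeneousSubmodule σ R) (a := p) m
      ((mem_homogeneousSubmodule e q).mpr hq)

section

variable {n l : ℕ} (v : Fin n → ℂ) (b : Fin l → Fin n → ℂ) (u : Fin n → ℕ)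

theorem mem_nsupp_sub_sdiff_nsupp_iff {i : Fin n} :
    i ∈ nsupp (fun i => v i - (u i : ℂ)) \ nsupp v ↔ ∃ k < u i, v i = k := by
  simp only [nsupp, mem_sdiff, mem_filter, mem_univ, true_and, not_exists, not_and]
  constructor
  · rintro ⟨⟨m, hm, hvm⟩, hv⟩
    have hvi : v i = ((m + u i : ℤ) : ℂ) := by push_cast; linear_combination hvm
    have hnonneg : 0 ≤ m + u i := not_lt.mp fun hneg => hv _ hneg hvi
    refine ⟨(m + u i).toNat, by omega, ?_⟩
    rw [hvi]
    exact_mod_cast (Int.toNat_of_nonneg hnonneg).symm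
  · rintro ⟨k, hk, hvk⟩
    refine ⟨⟨k - u i, by omega, by push_cast; linear_combination hvk⟩, fun m hm hvm => ?_⟩
    have : (k : ℤ) = m := by exact_mod_cast hvk.symm.trans hvm
    omega

theorem card_filter_sub_natCast_eq_zero_s13 (i : Fin n) :
    #((range (u i)).filter (fun k : ℕ => ¬ v i - k ≠ 0)) =
      if i ∈ nsupp (fun i => v i - (u i : ℂ)) \ nsupp v then 1 else 0 := by
  simp only [not_not, sub_eq_zero]
  split_ifs with hi
  · obtain ⟨k, hk, hvk⟩ := (mem_nsupp_sub_sdiff_nsupp_iff v u).mp hi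
    rw [card_eq_one]
    refine ⟨k, eq_singleton_iff_unique_mem.mpr ⟨by simp [hk, hvk], fun j hj => ?_⟩⟩
    simp only [mem_filter] at hj
    exact_mod_cast hj.2.symm.trans hvk
  · rw [card_eq_zero, filter_eq_empty_iff]
    exact fun k hk hvk => hi ((mem_nsupp_sub_sdiff_nsupp_iff v u).mpr ⟨k, mem_range.mp hk, hvk⟩)

noncomputable def pertFFmvReduced : MvPolynomial (Fin l) ℂ :=
  ∏ i, ∏ k ∈ (range (u i)).filter (fun k : ℕ => v i - (k : ℂ) ≠ 0), (C (v i - (k : ℂ)) + ell b i)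

theorem constantCoeff_ell (i : Fin n) : constantCoeff (ell b i) = 0 := by
  simp [ell]

theorem constantCoeff_pertFFmvReduced :
    constantCoeff (pertFFmvReduced v b u) = redffall v u := by
  simp [pertFFmvReduced, redffall, constantCoeff_ell]

theorem pertFFmv_eq_pertFFmvReduced_mul :
    pertFFmv v b u =
      pertFFmvReduced v b u * ∏ i ∈ nsupp (fun i => v i - (u i : ℂ)) \ nsupp v, ell b i := by
  have hzero (i : Fin n) : ∏ k ∈ (range (u i)).filter (fun k : ℕ => ¬ v i - k ≠ 0),
      (C (v i - (k : ℂ)) + ell b i) =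
        ell b i ^ (if i ∈ nsupp (fun i => v i - (u i : ℂ)) \ nsupp v then 1 else 0) := by
    rw [← card_filter_sub_natCast_eq_zero_s13, ← prod_const]
    refine prod_congr rfl fun k hk => ?_
    rw [(mem_filter.mp hk).2 |> not_not.mp, map_zero, zero_add]
  unfold pertFFmv
  conv_lhs => enter [2, i]; rw [← prod_filter_mul_prod_filter_not _ (fun k : ℕ => v i - k ≠ 0)]
  simp only [prod_mul_distrib, hzero, pow_ite, pow_one, pow_zero, prod_ite_mem, univ_inter,
    pertFFmvReduced]

theorem isHomogeneous_ell (i : Fin n) : (ell b i).IsHomogeneous 1 :=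
  IsHomogeneous.sum _ _ _ fun j _ => by
    simpa using (isHomogeneous_C (Fin l) (b j i)).mul (isHomogeneous_X ℂ j)

theorem isHomogeneous_prod_ell (s : Finset (Fin n)) : (∏ i ∈ s, ell b i).IsHomogeneous #s := by
  simpa using IsHomogeneous.prod s _ _ fun i _ => isHomogeneous_ell b i

end

theorem pertFFmv_lowest_component_general {n l : ℕ}
    (v : Fin n → ℂ) (b : Fin l → Fin n → ℂ) (u : Fin n → ℕ)
    (e : ℕ) (he : e = ((nsupp (fun i => v i - (u i : ℂ))) \ nsupp v).card) :
    (∀ m < e, MvPolynomial.homogeneousComponent m (pertFFmv v b u) = 0) ∧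
    MvPolynomial.homogeneousComponent e (pertFFmv v b u) =
      MvPolynomial.C (redffall v u) *
        ∏ i ∈ (nsupp (fun i => v i - (u i : ℂ))) \ nsupp v, ell b i := by
  have hL := isHomogeneous_prod_ell b (nsupp (fun i => v i - (u i : ℂ)) \ nsupp v)
  rw [← he] at hL
  simp only [pertFFmv_eq_pertFFmvReduced_mul, homogeneousComponent_mul_of_isHomogeneous_right hL]
  refine ⟨fun m hm => if_neg (by omega), ?_⟩
  rw [if_pos le_rfl, Nat.sub_self, homogeneousComponent_zero, ← constantCoeff_eq,
    constantCoeff_pertFFmvReduced]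

/-- multivariate analogue of Lemma 5.1, underlying Lemma 6.1: with
`e = |nsupp(v−u) \ nsupp(v)|`, every homogeneous component of `Q` of total degree `< e`
vanishes, and the component of degree `e` is `[v]^_u · ∏_{i ∈ nsupp(v−u)\nsupp(v)} ℓ_i`. -/
theorem pertFFmv_lowest_component {n l : ℕ} (hn : 0 < n) (hl : 0 < l)
    (v : Fin n → ℂ) (b : Fin l → Fin n → ℂ) (u : Fin n → ℕ)
    (e : ℕ) (he : e = ((nsupp (fun i => v i - (u i : ℂ))) \ nsupp v).card) :
    (∀ m < e, MvPolynomial.homogeneousComponent m (pertFFmv v b u) = 0) ∧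
    MvPolynomial.homogeneousComponent e (pertFFmv v b u) =
      MvPolynomial.C (redffall v u) *
        ∏ i ∈ (nsupp (fun i => v i - (u i : ℂ))) \ nsupp v, ell b i :=
  pertFFmv_lowest_component_general v b u e he
end
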